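/- Let G be a group generated by a finite symmetric set S, let G_n ≤ G be a finite-index subgroup with Schreier graph Γ_n = (V_n, E_n) on V_n = G/G_n, and let Z ⊆ 𝕋^{S×G} be the image of the homomorphism Φ : 𝕋^G → 𝕋^{S×G}, Φ((θ_g)_g) = (θ_{sg} − θ_g)_{s∈S,g∈G}. Let P ⊆ G be finite, let C ⊆ G be a finite subset which is connected in the Cayley graph Cay(G, S) and satisfies C ⊇ P ∪ SP, and suppose that for every v ∈ V_n the map C → V_n, g ↦ g·v, is injective and defines a graph isomorphism between the restriction of Cay(G, S) to C and the restriction of Γ_n to C·v. Then for every 𝕋-valued 1-cocycle α ∈ Z^1(Γ_n, 𝕋) and every v ∈ V_n, { (γ(s, g·v))_{s∈S, g∈P} : γ ∈ α + B^1(Γ_n, 𝕋) } = π_P(Z), where π_P : 𝕋^{S×G} → 𝕋^{S×P} is the coordinate projection. -/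

import Mathlib

/-!
Along a Cayley path inside `C` the cocycle `α` can be integrated: fixing `a₀ ∈ C`, set
`F c := ∑ α` along any `S`-word leading from `a₀` to `c`, read in the Schreier graph from `a₀·v`.
Two such words have the same product, so they differ by a relation and the cocycle condition makes
`F` well defined; then `α (s, g·v) = F (s g) - F g` whenever `g, s g ∈ C`. Hence the cochain
`α + dβ` restricted to the edges at `P·v` is `Φ θ` restricted to `S × P` for `θ = F + β (· • v)`,
and conversely `Φ θ` is realised by any `β` with `β (c·v) = θ c - F c` on `C`, which exists
because `c ↦ c·v` is injective on `C`.
-/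

/-- The sum of the cochain `α : E → 𝕋` around the based loop determined by the word `w` and the
starting vertex `v` of the Schreier graph. -/
noncomputable def graphCocycleSum {G : Type*} [Group G] {H : Subgroup G}
    (α : G → G ⧸ H → UnitAddCircle) : List G → G ⧸ H → UnitAddCircle
  | [], _ => 0
  | s :: w, v => graphCocycleSum α w v + α s (w.prod • v)

/-- `α` is a `𝕋`-valued 1-cocycle on the Schreier graph: it sums to zero around every loop
coming from a relation. -/
def IsGraphCocycle {G : Type*} [Group G] (S : Finset G) {H : Subgroup G}
    (α : G → G ⧸ H → UnitAddCircle) : Prop :=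
  ∀ w : List G, (∀ s ∈ w, s ∈ S) → w.prod = 1 → ∀ v, graphCocycleSum α w v = 0

/-- Reachability inside the subset `C` along (undirected) edges of the Cayley graph
`Cay(G, S)`. -/
inductive CayleyReachIn {G : Type*} [Group G] (S : Finset G) (C : Set G) : G → G → Prop
  | refl (a : G) : CayleyReachIn S C a a
  | step {a b c : G} : CayleyReachIn S C a b → c ∈ C →
      (∃ s ∈ S, c = s * b ∨ b = s * c) → CayleyReachIn S C a c

lemma graphCocycleSum_append {G : Type*} [Group G] {H : Subgroup G}
    (α : G → G ⧸ H → UnitAddCircle) (w₂ w₁ : List G) (v : G ⧸ H) :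
    graphCocycleSum α (w₂ ++ w₁) v =
      graphCocycleSum α w₁ v + graphCocycleSum α w₂ (w₁.prod • v) := by
  induction w₂ with
  | nil => simp [graphCocycleSum]
  | cons s w ih =>
    simp only [List.cons_append, graphCocycleSum, ih, List.prod_append, mul_smul]
    abel

lemma CayleyReachIn.exists_word {G : Type*} [Group G] {S : Finset G} (hsym : ∀ s ∈ S, s⁻¹ ∈ S)
    {C : Set G} {a b : G} (h : CayleyReachIn S C a b) :
    ∃ w : List G, (∀ s ∈ w, s ∈ S) ∧ w.prod * a = b := by
  induction h with
  | refl => exact ⟨[], by simp, by simp⟩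
  | step _ _ hedge ih =>
    obtain ⟨w, hwS, rfl⟩ := ih
    obtain ⟨s, hs, hforward | hbackward⟩ := hedge
    · exact ⟨s :: w, by simpa [hs] using hwS, by rw [List.prod_cons, mul_assoc, hforward]⟩
    · refine ⟨s⁻¹ :: w, by simpa [hsym s hs] using hwS, ?_⟩
      rw [List.prod_cons, mul_assoc, hbackward, inv_mul_cancel_left]

/-- Prepending the inverse word of `w₂` turns both words into relations. -/
lemma IsGraphCocycle.graphCocycleSum_eq_of_prod_eq {G : Type*} [Group G] {S : Finset G}
    {H : Subgroup G} {α : G → G ⧸ H → UnitAddCircle} (hα : IsGraphCocycle S α)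
    (hsym : ∀ s ∈ S, s⁻¹ ∈ S) {w₁ w₂ : List G} (hw₁ : ∀ s ∈ w₁, s ∈ S)
    (hw₂ : ∀ s ∈ w₂, s ∈ S) (hprod : w₁.prod = w₂.prod) (v : G ⧸ H) :
    graphCocycleSum α w₁ v = graphCocycleSum α w₂ v := by
  set winv : List G := (w₂.map (·⁻¹)).reverse
  have hwinv : ∀ s ∈ winv, s ∈ S := by
    intro s hs
    obtain ⟨t, ht, rfl⟩ := List.mem_map.mp (List.mem_reverse.mp hs)
    exact hsym t (hw₂ t ht)
  have hprod_inv : winv.prod = w₂.prod⁻¹ := (List.prod_inv_reverse w₂).symm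
  have hloop : ∀ w : List G, (∀ s ∈ w, s ∈ S) → w.prod = w₂.prod →
      graphCocycleSum α (winv ++ w) v = 0 := fun w hw hwprod =>
    hα _ (by simpa using fun s hs => hs.elim (hwinv s) (hw s))
      (by rw [List.prod_append, hprod_inv, hwprod, inv_mul_cancel]) v
  have h₁ := hloop w₁ hw₁ hprod
  have h₂ := hloop w₂ hw₂ rfl
  rw [graphCocycleSum_append, hprod] at h₁
  rw [graphCocycleSum_append] at h₂
  exact add_right_cancel (h₁.trans h₂.symm)

lemma IsGraphCocycle.exists_primitive_on {G : Type*} [Group G] {S : Finset G} {H : Subgroup G}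
    {α : G → G ⧸ H → UnitAddCircle} (hα : IsGraphCocycle S α) (hsym : ∀ s ∈ S, s⁻¹ ∈ S)
    {C : Set G} (hconn : ∀ a ∈ C, ∀ b ∈ C, CayleyReachIn S C a b) (v : G ⧸ H) :
    ∃ F : G → UnitAddCircle,
      ∀ g ∈ C, ∀ s ∈ S, s * g ∈ C → F (s * g) = F g + α s (g • v) := by
  rcases C.eq_empty_or_nonempty with rfl | ⟨a₀, ha₀⟩
  · exact ⟨0, by simp⟩
  choose! word hwordS hword using fun c (hc : c ∈ C) => (hconn a₀ ha₀ c hc).exists_word hsym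
  refine ⟨fun c => graphCocycleSum α (word c) (a₀ • v), fun g hg s hs hsg => ?_⟩
  have hstep : graphCocycleSum α (word (s * g)) (a₀ • v) =
      graphCocycleSum α (s :: word g) (a₀ • v) :=
    hα.graphCocycleSum_eq_of_prod_eq hsym (hwordS _ hsg) (by simpa [hs] using hwordS g hg)
      (mul_right_cancel ((hword _ hsg).trans (by rw [List.prod_cons, mul_assoc, hword g hg]))) _
  dsimp only
  rw [hstep, graphCocycleSum, ← mul_smul, hword g hg]

lemma Set.InjOn.exists_comp_eqOn {α β γ : Type*} [Nonempty α] {f : α → β} {s : Set α}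
    (hf : Set.InjOn f s) (g : α → γ) : ∃ h : β → γ, ∀ a ∈ s, h (f a) = g a :=
  ⟨g ∘ Function.invFunOn f s, fun _ ha => congrArg g (hf.leftInvOn_invFunOn ha)⟩

theorem coset_projection_eq_popa_general {G : Type*} [Group G] (S : Finset G)
    (hsym : ∀ s ∈ S, s⁻¹ ∈ S)
    (H : Subgroup G)
    (P : Finset G) (C : Finset G)
    (hPC : ∀ g ∈ P, g ∈ C) (hSPC : ∀ s ∈ S, ∀ g ∈ P, s * g ∈ C)
    (hconn : ∀ a ∈ C, ∀ b ∈ C, CayleyReachIn S (↑C) a b)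
    (v : G ⧸ H)
    (hinj : Set.InjOn (fun g : G => g • v) ↑C)
    (α : G → G ⧸ H → UnitAddCircle) (hα : IsGraphCocycle S α) :
    {z : (↥S × ↥P) → UnitAddCircle |
        ∃ γ : G → G ⧸ H → UnitAddCircle,
          (∃ β : G ⧸ H → UnitAddCircle,
            ∀ s ∈ S, ∀ u : G ⧸ H, γ s u = α s u + (β (s • u) - β u)) ∧
          z = fun p => γ (p.1 : G) ((p.2 : G) • v)} =
      {z : (↥S × ↥P) → UnitAddCircle |
        ∃ θ : G → UnitAddCircle, z = fun p => θ ((p.1 : G) * (p.2 : G)) - θ (p.2 : G)} := by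
  obtain ⟨F, hF⟩ := hα.exists_primitive_on hsym (C := ↑C) hconn v
  have hFP : ∀ s ∈ S, ∀ g ∈ P, F (s * g) = F g + α s (g • v) := fun s hs g hg =>
    hF g (hPC g hg) s hs (hSPC s hs g hg)
  ext z
  constructor
  · rintro ⟨γ, ⟨β, hβ⟩, rfl⟩
    refine ⟨fun g => F g + β (g • v), funext fun ⟨⟨s, hs⟩, ⟨g, hg⟩⟩ => ?_⟩
    simp only [hβ s hs, hFP s hs g hg, mul_smul]
    abel
  · rintro ⟨θ, rfl⟩
    obtain ⟨β, hβ⟩ := hinj.exists_comp_eqOn (θ - F)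
    refine ⟨fun s u => α s u + (β (s • u) - β u), ⟨β, fun _ _ _ => rfl⟩,
      funext fun ⟨⟨s, hs⟩, ⟨g, hg⟩⟩ => ?_⟩
    simp only [← mul_smul, hβ _ (hSPC s hs g hg), hβ _ (hPC g hg), Pi.sub_apply, hFP s hs g hg]
    abel

/-- **Lemma (cosets of coboundaries project onto the Popa subgroup).**
Let `Z ≤ 𝕋^{S×G}` be the image of `Φ(θ) = (θ_{sg} − θ_g)_{s,g}`, let `P ⊆ G` be finite, let
`C ⊇ P ∪ SP` be finite and connected in `Cay(G, S)`, and suppose `g ↦ g·v` is a graph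
isomorphism from `Cay(G, S)|_C` onto `Γ|_{C·v}`.  Then, for every 1-cocycle `α` on the Schreier
graph and every vertex `v`, the projections to the edges emanating from `P·v` of the coset
`α + B¹(Γ, 𝕋)` form exactly `π_P(Z)`. -/
theorem coset_projection_eq_popa {G : Type*} [Group G] (S : Finset G)
    (hsym : ∀ s ∈ S, s⁻¹ ∈ S) (hgen : Subgroup.closure (S : Set G) = ⊤)
    (H : Subgroup G) (hHfin : H.FiniteIndex)
    (P : Finset G) (C : Finset G)
    (hPC : ∀ g ∈ P, g ∈ C) (hSPC : ∀ s ∈ S, ∀ g ∈ P, s * g ∈ C)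
    (hconn : ∀ a ∈ C, ∀ b ∈ C, CayleyReachIn S (↑C) a b)
    (v : G ⧸ H)
    (hinj : Set.InjOn (fun g : G => g • v) ↑C)
    (hedge : ∀ a ∈ C, ∀ b ∈ C, ∀ s ∈ S, b • v = (s * a) • v → b = s * a)
    (α : G → G ⧸ H → UnitAddCircle) (hα : IsGraphCocycle S α) :
    {z : (↥S × ↥P) → UnitAddCircle |
        ∃ γ : G → G ⧸ H → UnitAddCircle,
          (∃ β : G ⧸ H → UnitAddCircle,
            ∀ s ∈ S, ∀ u : G ⧸ H, γ s u = α s u + (β (s • u) - β u)) ∧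
          z = fun p => γ (p.1 : G) ((p.2 : G) • v)} =
      {z : (↥S × ↥P) → UnitAddCircle |
        ∃ θ : G → UnitAddCircle, z = fun p => θ ((p.1 : G) * (p.2 : G)) - θ (p.2 : G)} :=
  coset_projection_eq_popa_general S hsym H P C hPC hSPC hconn v hinj α hα
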